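/- arXiv:1202.3323 — 5 statements merged into one kernel-verified Lean document; each statement's English description precedes it below -/
import Mathlib

section
/- Let d ≥ 1, η > 0, α ∈ (0,1), T ≥ 1. Consider the fixed-share forecaster defined by p_1 = (1/d,…,1/d), v_{j,t+1} = p_{j,t} e^{-η ℓ_{j,t}} / Σ_i p_{i,t} e^{-η ℓ_{i,t}}, and p_{j,t+1} = α/d + (1-α) v_{j,t+1}, for loss vectors ℓ_t ∈ [0,1]^d. Then for every sequence u_1,…,u_T ∈ ℝ_+^d, Σ_{t=1}^T ‖u_t‖_1 (p_t·ℓ_t) - Σ_{t=1}^T u_t·ℓ_t ≤ (‖u_1‖_1 ln d)/η + (η/8) Σ_{t=1}^T ‖u_t‖_1 + (m(u_1^T)/η) ln(d/α) + ((Σ_{t=2}^T ‖u_t‖_1 - m(u_1^T))/η) ln(1/(1-α)), where m(u_1^T) = Σ_{t=2}^T D_TV(u_t, u_{t-1}). -/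
open Real Finset

/-!
Hoeffding's lemma turns each round of exponential weighting into the per-expert bound
`p_t·ℓ_t - ℓ_{i,t} ≤ η/8 + (ln v_{i,t+1} - ln p_{i,t}) / η`. Weighting by `u_t` and summing over
the rounds, the right-hand sides telescope into the terms `u_{t-1}·ln v_t - u_t·ln p_t`. The
fixed-share step gives `p_t ≥ α/d` and `p_t ≥ (1-α) v_t`, so the part of `u_t` exceeding `u_{t-1}`,
of total mass `D_TV(u_t, u_{t-1})`, costs at most `ln(d/α)` and the rest at most `ln(1/(1-α))`.
-/

/-- `D_TV(x,y) = Σ_{i : x_i ≥ y_i} (x_i - y_i)`. -/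
noncomputable def dtv {d : ℕ} (x y : Fin d → ℝ) : ℝ :=
  ∑ i ∈ Finset.univ.filter (fun i => y i ≤ x i), (x i - y i)

/-- Hoeffding's lemma for a distribution `w` on a finite type. -/
theorem sum_mul_exp_le_exp {ι : Type*} [Fintype ι] {w x : ι → ℝ} (hw : ∀ i, 0 ≤ w i)
    (hw1 : ∑ i, w i = 1) (hx : ∀ i, x i ∈ Set.Icc (0 : ℝ) 1) (s : ℝ) :
    ∑ i, w i * exp (s * x i) ≤ exp (s * ∑ i, w i * x i + s ^ 2 / 8) := by
  let _ : MeasurableSpace ι := ⊤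
  let P := PMF.ofFintype (fun i => ENNReal.ofReal (w i)) (by
    rw [← ENNReal.ofReal_sum_of_nonneg fun i _ => hw i, hw1, ENNReal.ofReal_one])
  have hint : ∀ f : ι → ℝ, ∫ i, f i ∂P.toMeasure = ∑ i, w i * f i := fun f => by
    simp [P, PMF.integral_eq_sum, ENNReal.toReal_ofReal (hw _)]
  have hoeffding := (ProbabilityTheory.hasSubgaussianMGF_of_mem_Icc (μ := P.toMeasure)
    (measurable_of_countable x).aemeasurable (MeasureTheory.ae_of_all _ hx)).mgf_le s
  have hvar : ((‖(1 : ℝ) - 0‖₊ / 2) ^ 2 : NNReal) * s ^ 2 / 2 = s ^ 2 / 8 := by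
    norm_num
    ring
  simp only [ProbabilityTheory.mgf, hint, hvar] at hoeffding
  have hcenter : ∑ i, w i * exp (s * x i)
      = exp (s * ∑ i, w i * x i) * ∑ i, w i * exp (s * (x i - ∑ j, w j * x j)) := by
    rw [Finset.mul_sum]
    refine Finset.sum_congr rfl fun i _ => ?_
    rw [mul_sub, exp_sub]
    field_simp
  rw [hcenter, exp_add]
  gcongr

theorem dtv_eq_sum_posPart {d : ℕ} (x y : Fin d → ℝ) : dtv x y = ∑ i, (x i - y i)⁺ := by
  rw [dtv, Finset.sum_filter]
  refine Finset.sum_congr rfl fun i _ => ?_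
  split_ifs with h
  · exact (posPart_eq_self.2 (sub_nonneg.2 h)).symm
  · exact (posPart_eq_zero.2 (sub_nonpos.2 (le_of_not_ge h))).symm

theorem Finset.sum_Icc_sub_eq_sub_add_sum_shift {M : Type*} [AddCommGroup M] (F G : ℕ → M)
    {T : ℕ} (hT : 1 ≤ T) :
    ∑ t ∈ Icc 1 T, (F t - G t) = F T - G 1 + ∑ t ∈ Icc 2 T, (F (t - 1) - G t) := by
  induction T, hT using Nat.le_induction with
  | base => simp
  | succ T hT ih =>
    rw [sum_Icc_succ_top (by omega), ih, sum_Icc_succ_top (by omega), Nat.add_sub_cancel]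
    abel

theorem mul_sub_mul_le_posPart_mul_add {a b x y L₁ L₂ : ℝ} (ha : 0 ≤ a) (hb : 0 ≤ b)
    (hx : x ≤ 0) (h₁ : x - y ≤ L₁) (h₂ : -y ≤ L₂) :
    a * x - b * y ≤ (b - a)⁺ * L₂ + (b - (b - a)⁺) * L₁ := by
  rcases le_total a b with hab | hba
  · rw [posPart_eq_self.2 (sub_nonneg.2 hab)]
    nlinarith [mul_le_mul_of_nonneg_left h₁ ha, mul_le_mul_of_nonneg_left h₂ (sub_nonneg.2 hab)]
  · rw [posPart_eq_zero.2 (sub_nonpos.2 hba)]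
    nlinarith [mul_le_mul_of_nonneg_left h₁ hb,
      mul_nonpos_of_nonneg_of_nonpos (sub_nonneg.2 hba) hx]

section FixedShare

variable {ι : Type*} [Fintype ι]

noncomputable def expWeights (η : ℝ) (p ℓ : ι → ℝ) : ι → ℝ :=
  fun j => p j * exp (-η * ℓ j) / ∑ i, p i * exp (-η * ℓ i)

noncomputable def fixedShare (α : ℝ) (v : ι → ℝ) : ι → ℝ :=
  fun j => α / Fintype.card ι + (1 - α) * v j

variable {η α : ℝ} {p ℓ v : ι → ℝ}

theorem sum_mul_exp_pos [Nonempty ι] (hp : ∀ i, 0 < p i) : 0 < ∑ i, p i * exp (-η * ℓ i) :=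
  Finset.sum_pos (fun i _ => mul_pos (hp i) (exp_pos _)) univ_nonempty

theorem expWeights_pos [Nonempty ι] (hp : ∀ i, 0 < p i) (j : ι) : 0 < expWeights η p ℓ j :=
  div_pos (mul_pos (hp j) (exp_pos _)) (sum_mul_exp_pos hp)

theorem sum_expWeights [Nonempty ι] (hp : ∀ i, 0 < p i) : ∑ j, expWeights η p ℓ j = 1 := by
  simp only [expWeights]
  rw [← Finset.sum_div, div_self (sum_mul_exp_pos hp).ne']

theorem log_expWeights [Nonempty ι] (hp : ∀ i, 0 < p i) (j : ι) :
    log (expWeights η p ℓ j) = log (p j) - η * ℓ j - log (∑ i, p i * exp (-η * ℓ i)) := by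
  rw [expWeights, log_div (mul_pos (hp j) (exp_pos _)).ne' (sum_mul_exp_pos hp).ne',
    log_mul (hp j).ne' (exp_pos _).ne', log_exp]
  ring

theorem sub_le_log_expWeights_sub [Nonempty ι] (hη : 0 < η) (hp : ∀ i, 0 < p i)
    (hp1 : ∑ i, p i = 1) (hℓ : ∀ i, ℓ i ∈ Set.Icc (0 : ℝ) 1) (j : ι) :
    ∑ i, p i * ℓ i - ℓ j ≤ η / 8 + (log (expWeights η p ℓ j) - log (p j)) / η := by
  have hW := log_le_log (sum_mul_exp_pos hp)
    (sum_mul_exp_le_exp (fun i => (hp i).le) hp1 hℓ (-η))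
  rw [log_exp] at hW
  have hlogW : log (∑ i, p i * exp (-η * ℓ i)) / η ≤ η / 8 - ∑ i, p i * ℓ i := by
    rw [div_le_iff₀ hη]
    nlinarith
  have hratio : (log (expWeights η p ℓ j) - log (p j)) / η
      = -ℓ j - log (∑ i, p i * exp (-η * ℓ i)) / η := by
    rw [log_expWeights hp]
    field_simp
    ring
  rw [hratio]
  linarith

theorem weighted_regret_le_expWeights [Nonempty ι] (hη : 0 < η) (hp : ∀ i, 0 < p i)
    (hp1 : ∑ i, p i = 1) (hℓ : ∀ i, ℓ i ∈ Set.Icc (0 : ℝ) 1) {u : ι → ℝ} (hu : ∀ i, 0 ≤ u i) :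
    (∑ i, u i) * ∑ i, p i * ℓ i - ∑ i, u i * ℓ i
      ≤ η / 8 * ∑ i, u i + (∑ i, u i * (log (expWeights η p ℓ i) - log (p i))) / η :=
  calc (∑ i, u i) * ∑ i, p i * ℓ i - ∑ i, u i * ℓ i
      = ∑ i, u i * (∑ j, p j * ℓ j - ℓ i) := by
        rw [Finset.sum_mul, ← Finset.sum_sub_distrib]
        exact Finset.sum_congr rfl fun i _ => by ring
    _ ≤ ∑ i, u i * (η / 8 + (log (expWeights η p ℓ i) - log (p i)) / η) :=
        Finset.sum_le_sum fun i _ =>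
          mul_le_mul_of_nonneg_left (sub_le_log_expWeights_sub hη hp hp1 hℓ i) (hu i)
    _ = η / 8 * ∑ i, u i + (∑ i, u i * (log (expWeights η p ℓ i) - log (p i))) / η := by
        rw [Finset.mul_sum, Finset.sum_div, ← Finset.sum_add_distrib]
        exact Finset.sum_congr rfl fun i _ => by ring

theorem fixedShare_pos (hα : α ∈ Set.Ioo (0 : ℝ) 1) (hv : ∀ i, 0 ≤ v i) (j : ι) :
    0 < fixedShare α v j := by
  have hcard : 0 < (Fintype.card ι : ℝ) := Nat.cast_pos.2 (Fintype.card_pos_iff.2 ⟨j⟩)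
  exact add_pos_of_pos_of_nonneg (div_pos hα.1 hcard)
    (mul_nonneg (sub_nonneg.2 hα.2.le) (hv j))

theorem sum_fixedShare [Nonempty ι] (hv1 : ∑ i, v i = 1) : ∑ j, fixedShare α v j = 1 := by
  have hcard : (Fintype.card ι : ℝ) ≠ 0 := by positivity
  simp only [fixedShare]
  rw [Finset.sum_add_distrib, ← Finset.mul_sum, hv1, Finset.sum_const, Finset.card_univ,
    nsmul_eq_mul]
  field_simp
  ring

theorem log_sub_log_fixedShare_le (hα : α ∈ Set.Ioo (0 : ℝ) 1) {j : ι} (hv : 0 < v j) :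
    log (v j) - log (fixedShare α v j) ≤ log (1 / (1 - α)) := by
  have h1α : 0 < 1 - α := sub_pos.2 hα.2
  have hmix : (1 - α) * v j ≤ fixedShare α v j :=
    le_add_of_nonneg_left (div_nonneg hα.1.le (Nat.cast_nonneg _))
  have := log_le_log (mul_pos h1α hv) hmix
  rw [log_mul h1α.ne' hv.ne'] at this
  rw [one_div, log_inv]
  linarith

theorem neg_log_fixedShare_le (hα : α ∈ Set.Ioo (0 : ℝ) 1) {j : ι} (hv : 0 ≤ v j) :
    -log (fixedShare α v j) ≤ log (Fintype.card ι / α) := by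
  have hcard : 0 < (Fintype.card ι : ℝ) := Nat.cast_pos.2 (Fintype.card_pos_iff.2 ⟨j⟩)
  have hshare : α / Fintype.card ι ≤ fixedShare α v j :=
    le_add_of_nonneg_right (mul_nonneg (sub_nonneg.2 hα.2.le) hv)
  have := log_le_log (div_pos hα.1 hcard) hshare
  rw [← inv_div, log_inv]
  linarith

end FixedShare

theorem fixedShare_forecaster_pos_sum_one {ι : Type*} [Fintype ι] [Nonempty ι] {η α : ℝ}
    (hα : α ∈ Set.Ioo (0 : ℝ) 1) {T : ℕ} {p ℓ : ℕ → ι → ℝ}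
    (hp1 : ∀ j, p 1 j = 1 / Fintype.card ι)
    (hstep : ∀ t ∈ Icc 1 T, p (t + 1) = fixedShare α (expWeights η (p t) (ℓ t))) :
    ∀ t ∈ Icc 1 T, (∀ j, 0 < p t j) ∧ ∑ j, p t j = 1 := by
  intro t ht
  obtain ⟨ht1, htT⟩ := mem_Icc.1 ht
  clear ht
  induction t, ht1 using Nat.le_induction with
  | base =>
    have hcard : (Fintype.card ι : ℝ) ≠ 0 := by positivity
    simp only [hp1, sum_const, card_univ, nsmul_eq_mul]
    exact ⟨fun _ => by positivity, by field_simp⟩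
  | succ t ht ih =>
    obtain ⟨hpos, hsum⟩ := ih (by omega)
    rw [hstep t (mem_Icc.2 ⟨ht, by omega⟩)]
    exact ⟨fixedShare_pos hα fun i => (expWeights_pos hpos i).le,
      sum_fixedShare (sum_expWeights hpos)⟩

theorem sum_mul_log_sub_mul_log_fixedShare_le {d : ℕ} {α : ℝ} (hα : α ∈ Set.Ioo (0 : ℝ) 1)
    {a b v : Fin d → ℝ} (ha : ∀ i, 0 ≤ a i) (hb : ∀ i, 0 ≤ b i) (hv : ∀ i, 0 < v i)
    (hv1 : ∀ i, v i ≤ 1) :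
    ∑ i, (a i * log (v i) - b i * log (fixedShare α v i))
      ≤ dtv b a * log (d / α) + (∑ i, b i - dtv b a) * log (1 / (1 - α)) :=
  calc ∑ i, (a i * log (v i) - b i * log (fixedShare α v i))
      ≤ ∑ i, ((b i - a i)⁺ * log (d / α) + (b i - (b i - a i)⁺) * log (1 / (1 - α))) :=
        Finset.sum_le_sum fun i _ => mul_sub_mul_le_posPart_mul_add (ha i) (hb i)
          (log_nonpos (hv i).le (hv1 i)) (log_sub_log_fixedShare_le hα (hv i))
          (by simpa using neg_log_fixedShare_le hα (hv i).le)
    _ = dtv b a * log (d / α) + (∑ i, b i - dtv b a) * log (1 / (1 - α)) := by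
        rw [dtv_eq_sum_posPart, sum_add_distrib, ← sum_mul, ← sum_mul, sum_sub_distrib]

theorem sum_Icc_sum_mul_log_sub_le {d T : ℕ} (hT : 1 ≤ T) {α : ℝ} (hα : α ∈ Set.Ioo (0 : ℝ) 1)
    {u p v : ℕ → Fin d → ℝ} (hu : ∀ t ∈ Icc 1 T, ∀ i, 0 ≤ u t i) (hp1 : ∀ j, p 1 j = 1 / d)
    (hv : ∀ t ∈ Icc 1 T, ∀ j, 0 < v (t + 1) j) (hv1 : ∀ t ∈ Icc 1 T, ∑ j, v (t + 1) j = 1)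
    (hshare : ∀ t ∈ Icc 1 T, p (t + 1) = fixedShare α (v (t + 1))) :
    ∑ t ∈ Icc 1 T, ∑ i, u t i * (log (v (t + 1) i) - log (p t i))
      ≤ (∑ i, u 1 i) * log d
        + (∑ t ∈ Icc 2 T, dtv (u t) (u (t - 1))) * log (d / α)
        + (∑ t ∈ Icc 2 T, ∑ i, u t i - ∑ t ∈ Icc 2 T, dtv (u t) (u (t - 1)))
          * log (1 / (1 - α)) := by
  have hv_le_one : ∀ t ∈ Icc 1 T, ∀ j, v (t + 1) j ≤ 1 := fun t ht j =>
    hv1 t ht ▸ single_le_sum (fun i _ => (hv t ht i).le) (mem_univ j)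
  have hlast : ∑ i, u T i * log (v (T + 1) i) ≤ 0 := by
    have hT' : T ∈ Icc 1 T := mem_Icc.2 ⟨hT, le_rfl⟩
    exact sum_nonpos fun i _ => mul_nonpos_of_nonneg_of_nonpos (hu T hT' i)
      (log_nonpos (hv T hT' i).le (hv_le_one T hT' i))
  have hfirst : ∑ i, u 1 i * log (p 1 i) = -((∑ i, u 1 i) * log d) := by
    simp only [hp1, one_div, log_inv, mul_neg, sum_neg_distrib, ← sum_mul]
  have hshift : ∀ t ∈ Icc 2 T,
      ∑ i, u (t - 1) i * log (v (t - 1 + 1) i) - ∑ i, u t i * log (p t i)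
        ≤ dtv (u t) (u (t - 1)) * log (d / α)
          + (∑ i, u t i - dtv (u t) (u (t - 1))) * log (1 / (1 - α)) := by
    intro t ht
    obtain ⟨s, rfl⟩ : ∃ s, t = s + 1 := ⟨t - 1, by grind⟩
    have hs : s ∈ Icc 1 T := by grind
    rw [Nat.add_sub_cancel, hshare s hs, ← sum_sub_distrib]
    exact sum_mul_log_sub_mul_log_fixedShare_le hα (hu s hs) (hu (s + 1) (by grind))
      (hv s hs) (hv_le_one s hs)
  have hmid := (sum_le_sum hshift).trans_eq
    (by rw [sum_add_distrib, ← sum_mul, ← sum_mul, sum_sub_distrib])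
  simp only [mul_sub, sum_sub_distrib]
  rw [← sum_sub_distrib, sum_Icc_sub_eq_sub_add_sum_shift
    (fun t => ∑ i, u t i * log (v (t + 1) i)) (fun t => ∑ i, u t i * log (p t i)) hT]
  linarith

/-- Theorem 2 of the paper: the generalized shifting regret bound for the
fixed-share forecaster. -/
theorem stmt5 (d T : ℕ) (hd : 1 ≤ d) (hT : 1 ≤ T) (η α : ℝ) (hη : 0 < η)
    (hα : α ∈ Set.Ioo (0 : ℝ) 1)
    (ℓ p v : ℕ → Fin d → ℝ) (u : ℕ → Fin d → ℝ)
    (hℓ : ∀ t ∈ Finset.Icc 1 T, ∀ j, ℓ t j ∈ Set.Icc (0 : ℝ) 1)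
    (hp1 : ∀ j, p 1 j = 1 / d)
    (hv : ∀ t ∈ Finset.Icc 1 T, ∀ j,
      v (t + 1) j = p t j * Real.exp (-η * ℓ t j) / ∑ i, p t i * Real.exp (-η * ℓ t i))
    (hshare : ∀ t ∈ Finset.Icc 1 T, ∀ j,
      p (t + 1) j = α / d + (1 - α) * v (t + 1) j)
    (hu : ∀ t ∈ Finset.Icc 1 T, ∀ i, 0 ≤ u t i) :
    ∑ t ∈ Finset.Icc 1 T, (∑ i, u t i) * (∑ i, p t i * ℓ t i)
        - ∑ t ∈ Finset.Icc 1 T, ∑ i, u t i * ℓ t i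
      ≤ (∑ i, u 1 i) * Real.log d / η
        + (η / 8) * ∑ t ∈ Finset.Icc 1 T, ∑ i, u t i
        + (∑ t ∈ Finset.Icc 2 T, dtv (u t) (u (t - 1))) / η * Real.log (d / α)
        + (∑ t ∈ Finset.Icc 2 T, ∑ i, u t i
            - ∑ t ∈ Finset.Icc 2 T, dtv (u t) (u (t - 1))) / η
          * Real.log (1 / (1 - α)) := by
  have : Nonempty (Fin d) := ⟨⟨0, hd⟩⟩
  have hv_eq : ∀ t ∈ Icc 1 T, v (t + 1) = expWeights η (p t) (ℓ t) := fun t ht =>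
    funext (hv t ht)
  have hp_eq : ∀ t ∈ Icc 1 T, p (t + 1) = fixedShare α (v (t + 1)) := fun t ht =>
    funext fun j => by rw [hshare t ht j, fixedShare, Fintype.card_fin]
  have hprob := fixedShare_forecaster_pos_sum_one hα (by simpa using hp1)
    fun t ht => hv_eq t ht ▸ hp_eq t ht
  have hstep : ∀ t ∈ Icc 1 T, (∑ i, u t i) * ∑ i, p t i * ℓ t i - ∑ i, u t i * ℓ t i
      ≤ η / 8 * ∑ i, u t i + (∑ i, u t i * (log (v (t + 1) i) - log (p t i))) / η :=
    fun t ht => hv_eq t ht ▸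
      weighted_regret_le_expWeights hη (hprob t ht).1 (hprob t ht).2 (hℓ t ht) (hu t ht)
  have hshift := sum_Icc_sum_mul_log_sub_le hT hα hu hp1
    (fun t ht => hv_eq t ht ▸ expWeights_pos (hprob t ht).1)
    (fun t ht => hv_eq t ht ▸ sum_expWeights (hprob t ht).1) hp_eq
  calc ∑ t ∈ Icc 1 T, (∑ i, u t i) * (∑ i, p t i * ℓ t i) - ∑ t ∈ Icc 1 T, ∑ i, u t i * ℓ t i
      ≤ ∑ t ∈ Icc 1 T,
          (η / 8 * ∑ i, u t i + (∑ i, u t i * (log (v (t + 1) i) - log (p t i))) / η) := by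
        rw [← sum_sub_distrib]
        exact sum_le_sum hstep
    _ = η / 8 * ∑ t ∈ Icc 1 T, ∑ i, u t i
          + (∑ t ∈ Icc 1 T, ∑ i, u t i * (log (v (t + 1) i) - log (p t i))) / η := by
        rw [sum_add_distrib, ← mul_sum, ← sum_div]
    _ ≤ _ := (add_le_add_right (div_le_div_of_nonneg_right hshift hη.le) _).trans_eq (by ring)
end

section
/- Let u_t, u_{t-1} ∈ ℝ_+^d and let p̂, v ∈ (0,1]^d satisfy 1/p̂_i ≤ d/α and v_i/p̂_i ≤ 1/(1-α) for all i, with α ∈ (0,1). Then Σ_i (u_{i,t} ln(1/p̂_i) - u_{i,t-1} ln(1/v_i)) ≤ D_TV(u_t,u_{t-1}) ln(d/α) + (‖u_t‖_1 - D_TV(u_t,u_{t-1})) ln(1/(1-α)). -/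
open Real Finset

lemma mul_sub_mul_le_max_sub_mul_add {u u' a b A B : ℝ} (hu : 0 ≤ u) (hu' : 0 ≤ u')
    (hb : 0 ≤ b) (haA : a ≤ A) (habB : a - b ≤ B) :
    u * a - u' * b ≤ max (u - u') 0 * A + (u - max (u - u') 0) * B := by
  rcases le_total u' u with h | h
  · rw [max_eq_left (sub_nonneg.2 h)]
    nlinarith [mul_le_mul_of_nonneg_left haA (sub_nonneg.2 h), mul_le_mul_of_nonneg_left habB hu']
  · rw [max_eq_right (sub_nonpos.2 h)]
    nlinarith [mul_le_mul_of_nonneg_left habB hu, mul_nonneg (sub_nonneg.2 h) hb]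

lemma dtv_eq_sum_max {d : ℕ} (x y : Fin d → ℝ) : dtv x y = ∑ i, max (x i - y i) 0 := by
  rw [dtv, sum_filter]
  refine sum_congr rfl fun i _ => ?_
  split_ifs with h
  · exact (max_eq_left (sub_nonneg.2 h)).symm
  · exact (max_eq_right (sub_nonpos.2 (not_le.1 h).le)).symm

lemma Real.log_one_div_sub_log_one_div {p v : ℝ} (hp : p ≠ 0) (hv : v ≠ 0) :
    log (1 / p) - log (1 / v) = log (v / p) := by
  rw [log_div hv hp, one_div, one_div, log_inv, log_inv]; ring

theorem stmt7_general (d : ℕ) (α : ℝ)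
    (ut ut' phat v : Fin d → ℝ)
    (hut : ∀ i, 0 ≤ ut i) (hut' : ∀ i, 0 ≤ ut' i)
    (hphat : ∀ i, phat i ∈ Set.Ioc (0 : ℝ) 1) (hv : ∀ i, v i ∈ Set.Ioc (0 : ℝ) 1)
    (h1 : ∀ i, 1 / phat i ≤ d / α) (h2 : ∀ i, v i / phat i ≤ 1 / (1 - α)) :
    ∑ i, (ut i * Real.log (1 / phat i) - ut' i * Real.log (1 / v i))
      ≤ dtv ut ut' * Real.log (d / α)
        + ((∑ i, ut i) - dtv ut ut') * Real.log (1 / (1 - α)) := by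
  have coordinate_bound : ∀ i, ut i * log (1 / phat i) - ut' i * log (1 / v i) ≤
      max (ut i - ut' i) 0 * log (d / α) + (ut i - max (ut i - ut' i) 0) * log (1 / (1 - α)) := by
    intro i
    obtain ⟨hp, -⟩ := hphat i
    obtain ⟨hv0, hv1⟩ := hv i
    refine mul_sub_mul_le_max_sub_mul_add (hut i) (hut' i)
      (log_nonneg (one_le_one_div hv0 hv1)) (log_le_log (one_div_pos.2 hp) (h1 i)) ?_
    rw [log_one_div_sub_log_one_div hp.ne' hv0.ne']
    exact log_le_log (div_pos hv0 hp) (h2 i)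
  calc _ ≤ _ := sum_le_sum fun i _ => coordinate_bound i
    _ = _ := by rw [dtv_eq_sum_max, sum_add_distrib, ← sum_mul, ← sum_mul, sum_sub_distrib]

/-- The key intermediate inequality in the proof of Theorem 2, splitting the
per-round entropy change into a shift term and a stay term. -/
theorem stmt7 (d : ℕ) (α : ℝ) (hα : α ∈ Set.Ioo (0 : ℝ) 1)
    (ut ut' phat v : Fin d → ℝ)
    (hut : ∀ i, 0 ≤ ut i) (hut' : ∀ i, 0 ≤ ut' i)
    (hphat : ∀ i, phat i ∈ Set.Ioc (0 : ℝ) 1) (hv : ∀ i, v i ∈ Set.Ioc (0 : ℝ) 1)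
    (h1 : ∀ i, 1 / phat i ≤ d / α) (h2 : ∀ i, v i / phat i ≤ 1 / (1 - α)) :
    ∑ i, (ut i * Real.log (1 / phat i) - ut' i * Real.log (1 / v i))
      ≤ dtv ut ut' * Real.log (d / α)
        + ((∑ i, ut i) - dtv ut ut') * Real.log (1 / (1 - α)) :=
  stmt7_general d α ut ut' phat v hut hut' hphat hv h1 h2
end

section
/- Let u_1,…,u_T ∈ ℝ_+^d and weights w_{i,t} ∈ (0,1] satisfy C w_{i,t+1} ≥ w_{i,t} with C ≥ 1, and w_{i,1} ≥ 1/d (so w_{i,2} ≥ 1/(dC)). Then Σ_{t=2}^T Σ_i (u_{i,t} - u_{i,t-1}) ln(1/w_{i,t}) ≤ n(u_1^T)(ln d + T ln C) - ‖u_1‖_1 ln d, where n(u_1^T) = Σ_i max_{t≤T} u_{i,t}. -/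
open Real Finset

/-- Potential-function induction: telescoping bound for one coordinate. -/
lemma key_abel (N lc : ℝ) (hlc : 0 ≤ lc) (a L : ℕ → ℝ) (T : ℕ) (hT : 1 ≤ T)
    (haN : ∀ t, 1 ≤ t → t ≤ T → a t ≤ N)
    (ha0 : ∀ t, 1 ≤ t → t ≤ T → 0 ≤ a t)
    (hLC : ∀ t, 1 ≤ t → t < T → L (t + 1) ≤ L t + lc) :
    ∑ t ∈ Finset.Icc 2 T, (a t - a (t - 1)) * L t
      ≤ (N - a 1) * L 1 + ((T : ℝ) - 1) * (N * lc) - (N - a T) * L T := by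
  induction T, hT using Nat.le_induction with
  | base => simp
  | succ T hT ih =>
    rw [Finset.sum_Icc_succ_top (by omega : 2 ≤ T + 1)]
    have ih' := ih (fun t h1 h2 => haN t h1 (by omega))
      (fun t h1 h2 => ha0 t h1 (by omega))
      (fun t h1 h2 => hLC t h1 (by omega))
    have hB : 0 ≤ N - a T := by linarith [haN T hT (by omega)]
    have hN : 0 ≤ N := by linarith [ha0 T hT (by omega), haN T hT (by omega)]
    have h2 : (N - a T) * (L (T + 1) - L T) ≤ N * lc := by
      calc (N - a T) * (L (T + 1) - L T) ≤ (N - a T) * lc := by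
            have := hLC T hT (by omega)
            exact mul_le_mul_of_nonneg_left (by linarith) hB
        _ ≤ N * lc := mul_le_mul_of_nonneg_right (by linarith [ha0 T hT (by omega)]) hlc
    simp only [Nat.add_sub_cancel]
    push_cast
    nlinarith [ih', h2]

/-- The key telescoping inequality in the proof of Theorem 3:
`Σ_{t=2}^T Σ_i (u_{i,t} - u_{i,t-1}) ln(1/w_{i,t})
  ≤ n(u_1^T)(ln d + T ln C) - ‖u_1‖_1 ln d`. -/
theorem stmt15 (d T : ℕ) (hd : 1 ≤ d) (hT : 1 ≤ T) (C : ℝ) (hC : 1 ≤ C)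
    (u w : ℕ → Fin d → ℝ)
    (hu : ∀ t ∈ Finset.Icc 1 T, ∀ i, 0 ≤ u t i)
    (hw : ∀ t ∈ Finset.Icc 1 (T + 1), ∀ i, w t i ∈ Set.Ioc (0 : ℝ) 1)
    (hwC : ∀ t ∈ Finset.Icc 1 T, ∀ i, w t i ≤ C * w (t + 1) i)
    (hw1 : ∀ i, (1 : ℝ) / d ≤ w 1 i) :
    ∑ t ∈ Finset.Icc 2 T, ∑ i, (u t i - u (t - 1) i) * Real.log (1 / w t i)
      ≤ (∑ i, (Finset.Icc 1 T).sup' (Finset.nonempty_Icc.2 hT) (fun t => u t i))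
            * (Real.log d + T * Real.log C)
        - (∑ i, u 1 i) * Real.log d := by
  have hlogC : 0 ≤ Real.log C := Real.log_nonneg hC
  have hlogd : 0 ≤ Real.log d := Real.log_nonneg (by exact_mod_cast hd)
  rw [Finset.sum_comm]
  have hmain : ∀ i : Fin d,
      ∑ t ∈ Finset.Icc 2 T, (u t i - u (t - 1) i) * Real.log (1 / w t i)
        ≤ ((Finset.Icc 1 T).sup' (Finset.nonempty_Icc.2 hT) (fun t => u t i))
            * (Real.log d + T * Real.log C) - u 1 i * Real.log d := by
    intro i
    set N := (Finset.Icc 1 T).sup' (Finset.nonempty_Icc.2 hT) (fun t => u t i) with hNdef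
    have haN : ∀ t, 1 ≤ t → t ≤ T → u t i ≤ N := fun t h1 h2 =>
      Finset.le_sup' (fun t => u t i) (Finset.mem_Icc.2 ⟨h1, h2⟩)
    have ha0 : ∀ t, 1 ≤ t → t ≤ T → 0 ≤ u t i := fun t h1 h2 =>
      hu t (Finset.mem_Icc.2 ⟨h1, h2⟩) i
    have hwpos : ∀ t, 1 ≤ t → t ≤ T + 1 → 0 < w t i ∧ w t i ≤ 1 := fun t h1 h2 =>
      hw t (Finset.mem_Icc.2 ⟨h1, h2⟩) i
    have hLC : ∀ t, 1 ≤ t → t < T → Real.log (1 / w (t + 1) i) ≤ Real.log (1 / w t i) + Real.log C := by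
      intro t h1 h2
      have hwt := hwpos t h1 (by omega)
      have hwt1 := hwpos (t + 1) (by omega) (by omega)
      have hc := hwC t (Finset.mem_Icc.2 ⟨h1, by omega⟩) i
      rw [Real.log_div one_ne_zero (ne_of_gt hwt1.1), Real.log_div one_ne_zero (ne_of_gt hwt.1)]
      have : Real.log (w t i) ≤ Real.log C + Real.log (w (t + 1) i) := by
        rw [← Real.log_mul (by positivity) (ne_of_gt hwt1.1)]
        exact Real.log_le_log hwt.1 hc
      simp only [Real.log_one]
      linarith
    have key := key_abel N (Real.log C) hlogC (fun t => u t i)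
      (fun t => Real.log (1 / w t i)) T hT haN ha0 hLC
    have hN0 : 0 ≤ N := le_trans (ha0 1 le_rfl hT) (haN 1 le_rfl hT)
    have hNa1 : 0 ≤ N - u 1 i := by linarith [haN 1 le_rfl hT]
    have hL1 : Real.log (1 / w 1 i) ≤ Real.log d := by
      have hw1i := hwpos 1 le_rfl (by omega)
      rw [Real.log_div one_ne_zero (ne_of_gt hw1i.1), Real.log_one]
      have : Real.log (1 / (d : ℝ)) ≤ Real.log (w 1 i) :=
        Real.log_le_log (by positivity) (hw1 i)
      rw [Real.log_div one_ne_zero (by positivity), Real.log_one] at this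
      linarith
    have hLT : 0 ≤ Real.log (1 / w T i) := by
      have hwT := hwpos T hT (by omega)
      apply Real.log_nonneg
      rw [le_div_iff₀ hwT.1]
      linarith [hwT.2]
    have hLTa : 0 ≤ (N - u T i) * Real.log (1 / w T i) :=
      mul_nonneg (by linarith [haN T hT le_rfl]) hLT
    have h1 : (N - u 1 i) * Real.log (1 / w 1 i) ≤ (N - u 1 i) * Real.log d :=
      mul_le_mul_of_nonneg_left hL1 hNa1
    have h3 : ((T : ℝ) - 1) * (N * Real.log C) ≤ (T : ℝ) * (N * Real.log C) := by
      nlinarith [mul_nonneg hN0 hlogC]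
    nlinarith [key]
  calc ∑ i, ∑ t ∈ Finset.Icc 2 T, (u t i - u (t - 1) i) * Real.log (1 / w t i)
      ≤ ∑ i, (((Finset.Icc 1 T).sup' (Finset.nonempty_Icc.2 hT) (fun t => u t i))
            * (Real.log d + T * Real.log C) - u 1 i * Real.log d) :=
        Finset.sum_le_sum (fun i _ => hmain i)
    _ = _ := by rw [Finset.sum_sub_distrib, ← Finset.sum_mul, ← Finset.sum_mul]
end

section
/- Let η_t ≤ η_{t-1} be positive reals, p ∈ Δ_d with p_i > 0, and ℓ ∈ [0,1]^d. Define v_i = p_i^{η_t/η_{t-1}} e^{-η_t ℓ_i} / Σ_j p_j^{η_t/η_{t-1}} e^{-η_t ℓ_j}. Then for every q ∈ Δ_d, (p - q)·ℓ ≤ Σ_i q_i ((1/η_{t-1}) ln(1/p_i) - (1/η_t) ln(1/v_i)) + (1/η_t - 1/η_{t-1}) ln d + η_{t-1}/8. -/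
/-!
Write `κ = η_t / η_{t-1}` and `Z = ∑ⱼ p_j^κ e^{-η_t ℓ_j}`. Since
`log v_i = κ log p_i - η_t ℓ_i - log Z` and `κ / η_t = 1 / η_{t-1}`, the `q`-weighted sum equals
`-q·ℓ - (log Z) / η_t`, so the claim reduces to `log Z ≤ (1 - κ) log d - η_t p·ℓ + η_t η_{t-1} / 8`.
As `p_j^κ e^{-η_t ℓ_j} = (p_j e^{-η_{t-1} ℓ_j})^κ`, Jensen's inequality for the concave `x ↦ x^κ`
gives `Z ≤ d^{1-κ} (∑ⱼ p_j e^{-η_{t-1} ℓ_j})^κ`, and Hoeffding's lemma bounds that last sum by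
`exp (-η_{t-1} p·ℓ + η_{t-1}² / 8)`.
-/

open Real Finset

open MeasureTheory ProbabilityTheory in
theorem sum_mul_exp_le_of_mem_Icc {ι : Type*} [Fintype ι] {p x : ι → ℝ} {a b : ℝ}
    (hp : ∀ i, 0 ≤ p i) (hps : ∑ i, p i = 1) (hx : ∀ i, x i ∈ Set.Icc a b) (t : ℝ) :
    ∑ i, p i * exp (t * x i) ≤ exp (t * ∑ i, p i * x i + (b - a) ^ 2 * t ^ 2 / 8) := by
  let _ : MeasurableSpace ι := ⊤
  let P := PMF.ofFintype (fun i => ENNReal.ofReal (p i))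
    (by rw [← ENNReal.ofReal_sum_of_nonneg fun i _ => hp i, hps, ENNReal.ofReal_one])
  have integral_eq (f : ι → ℝ) : ∫ i, f i ∂P.toMeasure = ∑ i, p i * f i := by
    simp [PMF.integral_eq_sum, P, hp]
  have hoeffding := (hasSubgaussianMGF_of_mem_Icc (μ := P.toMeasure) (X := x)
    Measurable.of_discrete.aemeasurable (ae_of_all _ hx)).mgf_le t
  simp only [mgf, integral_eq] at hoeffding
  set m := ∑ i, p i * x i
  have hc : (((‖b - a‖₊ / 2) ^ 2 : NNReal) : ℝ) * t ^ 2 / 2 = (b - a) ^ 2 * t ^ 2 / 8 := by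
    push_cast; rw [Real.norm_eq_abs, div_pow, sq_abs]; ring
  rw [hc] at hoeffding
  calc ∑ i, p i * exp (t * x i) = exp (t * m) * ∑ i, p i * exp (t * (x i - m)) := by
        rw [mul_sum]; congr 1 with i
        rw [mul_left_comm, ← exp_add]; ring_nf
    _ ≤ exp (t * m) * exp ((b - a) ^ 2 * t ^ 2 / 8) := by gcongr
    _ = _ := (exp_add _ _).symm

theorem sum_rpow_le_card_rpow_mul_rpow_sum {ι : Type*} (s : Finset ι) {y : ι → ℝ}
    (hy : ∀ i ∈ s, 0 ≤ y i) {κ : ℝ} (hκ₀ : 0 ≤ κ) (hκ₁ : κ ≤ 1) :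
    ∑ i ∈ s, y i ^ κ ≤ (#s : ℝ) ^ (1 - κ) * (∑ i ∈ s, y i) ^ κ := by
  rcases s.eq_empty_or_nonempty with rfl | hs
  · simp only [sum_empty, card_empty, Nat.cast_zero]; positivity
  have hn : (0 : ℝ) < #s := by exact_mod_cast hs.card_pos
  have jensen := (concaveOn_rpow hκ₀ hκ₁).le_map_sum (t := s) (w := fun _ => (#s : ℝ)⁻¹)
    (p := y) (fun _ _ => by positivity) (by simp [hn.ne']) hy
  simp only [smul_eq_mul, ← mul_sum] at jensen
  rw [mul_rpow (by positivity) (sum_nonneg hy), inv_rpow hn.le] at jensen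
  calc ∑ i ∈ s, y i ^ κ = #s * ((#s : ℝ)⁻¹ * ∑ i ∈ s, y i ^ κ) := by field_simp
    _ ≤ #s * (((#s : ℝ) ^ κ)⁻¹ * (∑ i ∈ s, y i) ^ κ) := by gcongr
    _ = (#s : ℝ) ^ (1 - κ) * (∑ i ∈ s, y i) ^ κ := by
      rw [rpow_sub hn, rpow_one]; ring

theorem log_sum_rpow_mul_exp_le {ι : Type*} [Fintype ι] {p ℓ : ι → ℝ} (hp : ∀ i, 0 ≤ p i)
    (hps : ∑ i, p i = 1) (hℓ : ∀ i, ℓ i ∈ Set.Icc (0 : ℝ) 1) {η η' : ℝ} (hη : 0 < η)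
    (hηη' : η ≤ η') :
    log (∑ j, p j ^ (η / η') * exp (-η * ℓ j))
      ≤ (1 - η / η') * log (Fintype.card ι) - η * ∑ i, p i * ℓ i + η * η' / 8 := by
  have hη' : 0 < η' := hη.trans_le hηη'
  set κ := η / η'
  have hκη' : κ * η' = η := div_mul_cancel₀ η hη'.ne'
  have hterm (j : ι) : p j ^ κ * exp (-η * ℓ j) = (p j * exp (-η' * ℓ j)) ^ κ := by
    rw [mul_rpow (hp j) (exp_pos _).le, ← exp_mul, ← hκη']; ring_nf
  obtain ⟨i₀, -, hi₀⟩ := exists_ne_zero_of_sum_ne_zero (hps ▸ one_ne_zero : ∑ i, p i ≠ 0)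
  have hZ : 0 < ∑ j, p j ^ κ * exp (-η * ℓ j) :=
    sum_pos' (fun j _ => mul_nonneg (rpow_nonneg (hp j) _) (exp_pos _).le) ⟨i₀, mem_univ _,
      mul_pos (rpow_pos_of_pos ((hp i₀).lt_of_ne' hi₀) _) (exp_pos _)⟩
  have hS : ∑ j, p j * exp (-η' * ℓ j) ≤ exp (-η' * ∑ i, p i * ℓ i + η' ^ 2 / 8) := by
    simpa using sum_mul_exp_le_of_mem_Icc hp hps hℓ (-η')
  have hn : (0 : ℝ) < Fintype.card ι := by
    exact_mod_cast Fintype.card_pos_iff.2 ⟨i₀⟩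
  have jensen := sum_rpow_le_card_rpow_mul_rpow_sum univ (κ := κ)
    (fun j _ => mul_nonneg (hp j) (exp_pos (-η' * ℓ j)).le) (div_pos hη hη').le
    ((div_le_one hη').2 hηη')
  rw [← sum_congr rfl fun j _ => hterm j, card_univ] at jensen
  calc log (∑ j, p j ^ κ * exp (-η * ℓ j))
      ≤ log ((Fintype.card ι : ℝ) ^ (1 - κ) * exp (-η' * ∑ i, p i * ℓ i + η' ^ 2 / 8) ^ κ) := by
        refine log_le_log hZ (jensen.trans ?_)
        gcongr
        exact sum_nonneg fun j _ => mul_nonneg (hp j) (exp_pos _).le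
    _ = (1 - κ) * log (Fintype.card ι) + κ * (-η' * ∑ i, p i * ℓ i + η' ^ 2 / 8) := by
        rw [log_mul (by positivity) (by positivity), log_rpow hn, log_rpow (exp_pos _), log_exp]
    _ = _ := by rw [← hκη']; ring

theorem stmt17_general (d : ℕ) (ηt ηt' : ℝ) (hη : 0 < ηt) (hη' : ηt ≤ ηt')
    (p ℓ v q : Fin d → ℝ)
    (hp : ∀ i, 0 < p i) (hps : ∑ i, p i = 1)
    (hℓ : ∀ i, ℓ i ∈ Set.Icc (0 : ℝ) 1)
    (hv : ∀ i, v i = p i ^ (ηt / ηt') * Real.exp (-ηt * ℓ i)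
        / ∑ j, p j ^ (ηt / ηt') * Real.exp (-ηt * ℓ j))
    (hqs : ∑ i, q i = 1) :
    ∑ i, (p i - q i) * ℓ i
      ≤ (∑ i, q i * ((1 / ηt') * Real.log (1 / p i) - (1 / ηt) * Real.log (1 / v i)))
        + (1 / ηt - 1 / ηt') * Real.log d + ηt' / 8 := by
  set Z := ∑ j, p j ^ (ηt / ηt') * exp (-ηt * ℓ j)
  have hterm (i : Fin d) : 0 < p i ^ (ηt / ηt') * exp (-ηt * ℓ i) :=
    mul_pos (rpow_pos_of_pos (hp i) _) (exp_pos _)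
  have hZ : 0 < Z := sum_pos (fun j _ => hterm j) (nonempty_of_sum_ne_zero (hps ▸ one_ne_zero))
  have hlog_v (i : Fin d) : log (v i) = ηt / ηt' * log (p i) - ηt * ℓ i - log Z := by
    rw [hv i, log_div (hterm i).ne' hZ.ne', log_mul (rpow_pos_of_pos (hp i) _).ne'
      (exp_pos _).ne', log_rpow (hp i), log_exp]
    ring
  have hq_term (i : Fin d) : q i * ((1 / ηt') * log (1 / p i) - (1 / ηt) * log (1 / v i))
      = -(q i * ℓ i) - q i * (log Z / ηt) := by
    rw [one_div (p i), one_div (v i), log_inv, log_inv, hlog_v]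
    field_simp
    ring
  have hZ_div : log Z / ηt ≤ (1 / ηt - 1 / ηt') * log d - ∑ i, p i * ℓ i + ηt' / 8 := by
    have hZ_le := log_sum_rpow_mul_exp_le (fun i => (hp i).le) hps hℓ hη hη'
    have hκ : (1 / ηt - 1 / ηt') * ηt = 1 - ηt / ηt' := by field_simp
    rw [div_le_iff₀ hη]
    refine hZ_le.trans_eq ?_
    rw [Fintype.card_fin]
    linear_combination -log d * hκ
  rw [sum_congr rfl fun i _ => hq_term i, sum_sub_distrib, sum_neg_distrib, ← sum_mul, hqs,
    one_mul]
  simp only [sub_mul, sum_sub_distrib]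
  linarith

/-- Lemma 3 of the supplementary material: one-step regret bound for
exponential weights with a time-varying learning rate. -/
theorem stmt17 (d : ℕ) (hd : 1 ≤ d) (ηt ηt' : ℝ) (hη : 0 < ηt) (hη' : ηt ≤ ηt')
    (p ℓ v q : Fin d → ℝ)
    (hp : ∀ i, 0 < p i) (hps : ∑ i, p i = 1)
    (hℓ : ∀ i, ℓ i ∈ Set.Icc (0 : ℝ) 1)
    (hv : ∀ i, v i = p i ^ (ηt / ηt') * Real.exp (-ηt * ℓ i)
        / ∑ j, p j ^ (ηt / ηt') * Real.exp (-ηt * ℓ j))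
    (hq : ∀ i, 0 ≤ q i) (hqs : ∑ i, q i = 1) :
    ∑ i, (p i - q i) * ℓ i
      ≤ (∑ i, q i * ((1 / ηt') * Real.log (1 / p i) - (1 / ηt) * Real.log (1 / v i)))
        + (1 / ηt - 1 / ηt') * Real.log d + ηt' / 8 :=
  stmt17_general d ηt ηt' hη hη' p ℓ v q hp hps hℓ hv hqs
end

section
/- Let η_{t-1} ≥ η_t > 0, p ∈ Δ_d with all p_i > 0, and ℓ ∈ [0,1]^d. Then (1/d) Σ_j p_j e^{-η_{t-1} ℓ_j} ≥ ((1/d) Σ_j p_j^{η_t/η_{t-1}} e^{-η_t ℓ_j})^{η_{t-1}/η_t}. -/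
open Real Finset

/-! Writing `a_j = p_j e^{-η_{t-1} ℓ_j}`, the summands on the left are `a_j ^ (η_t / η_{t-1})`,
so the claim is Jensen's inequality for the convex map `x ↦ x ^ (η_{t-1} / η_t)` and the
uniform weights `1/d`. -/

theorem Real.rpow_mul_exp_mul {x : ℝ} (hx : 0 ≤ x) (θ y : ℝ) :
    x ^ θ * exp (θ * y) = (x * exp y) ^ θ := by
  rw [mul_rpow hx (exp_pos y).le, ← exp_mul, mul_comm y]

theorem Real.rpow_average_rpow_inv_le_average {ι : Type*} {s : Finset ι} (hs : s.Nonempty)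
    {a : ι → ℝ} (ha : ∀ i ∈ s, 0 ≤ a i) {r : ℝ} (hr : 1 ≤ r) :
    ((1 / #s : ℝ) * ∑ i ∈ s, a i ^ r⁻¹) ^ r ≤ (1 / #s : ℝ) * ∑ i ∈ s, a i := by
  have hweights : ∑ _i ∈ s, (1 / #s : ℝ) = 1 := by
    simp [hs.card_pos.ne']
  have hjensen := rpow_arith_mean_le_arith_mean_rpow s (fun _ => (1 / #s : ℝ))
    (fun i => a i ^ r⁻¹) (fun _ _ => by positivity) hweights
    (fun i hi => rpow_nonneg (ha i hi) _) hr
  rw [mul_sum, mul_sum]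
  convert hjensen using 3 with i hi
  rw [rpow_inv_rpow (ha i hi) (by linarith)]

theorem stmt18_general (d : ℕ) (hd : 1 ≤ d) (ηt ηt' : ℝ) (hη : 0 < ηt) (hη' : ηt ≤ ηt')
    (p ℓ : Fin d → ℝ) (hp : ∀ i, 0 < p i) :
    ((1 / d : ℝ) * ∑ j, p j ^ (ηt / ηt') * Real.exp (-ηt * ℓ j)) ^ (ηt' / ηt)
      ≤ (1 / d : ℝ) * ∑ j, p j * Real.exp (-ηt' * ℓ j) := by
  have hsummand : ∀ j,
      p j ^ (ηt / ηt') * exp (-ηt * ℓ j) = (p j * exp (-ηt' * ℓ j)) ^ (ηt / ηt') := by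
    intro j
    rw [← rpow_mul_exp_mul (hp j).le]
    congr 2
    field_simp [(hη.trans_le hη').ne']
  have hjensen := rpow_average_rpow_inv_le_average (univ_nonempty_iff.mpr ⟨⟨0, hd⟩⟩)
    (fun j _ => (mul_pos (hp j) (exp_pos (-ηt' * ℓ j))).le) ((one_le_div hη).mpr hη')
  simpa only [hsummand, inv_div, card_univ, Fintype.card_fin] using hjensen

/-- The Jensen's inequality step (convexity of `x ↦ x^{η_{t-1}/η_t}`) used in
the proof of the time-varying learning-rate lemma:
`(1/d) Σ_j p_j e^{-η_{t-1} ℓ_j} ≥ ((1/d) Σ_j p_j^{η_t/η_{t-1}} e^{-η_t ℓ_j})^{η_{t-1}/η_t}`. -/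
theorem stmt18 (d : ℕ) (hd : 1 ≤ d) (ηt ηt' : ℝ) (hη : 0 < ηt) (hη' : ηt ≤ ηt')
    (p ℓ : Fin d → ℝ) (hp : ∀ i, 0 < p i) (hps : ∑ i, p i = 1)
    (hℓ : ∀ i, ℓ i ∈ Set.Icc (0 : ℝ) 1) :
    ((1 / d : ℝ) * ∑ j, p j ^ (ηt / ηt') * Real.exp (-ηt * ℓ j)) ^ (ηt' / ηt)
      ≤ (1 / d : ℝ) * ∑ j, p j * Real.exp (-ηt' * ℓ j) :=
  stmt18_general d hd ηt ηt' hη hη' p ℓ hp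
end
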